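/- Let m₁, m₂, m₃ > 0 with m₁+m₂+m₃ = 1 and let x > 0 satisfy p(x) = 0, where p is the Euler quintic polynomial. Then the mass parameter β = (m₁(3x²+3x+1) + m₃x²(x²+3x+3)) / (x² + m₂((x+1)²(x²+1) − x²)) satisfies 0 ≤ β ≤ 7. -/

import Mathlib

/-!
Write `β = N / D`. For the upper bound, multiply `7 D - N` by `x (x⁴ + 2x³ + x² + 2x + 1) > 0`: modulo the quintic and
the normalisation `m₁ + m₂ + m₃ = 1`, this eliminates `m₁` and `m₃` and leaves
`2x³(x - 1)²(2x + 1)(x + 2) + 8 m₂ x (x⁴ + 2x³ + x² + 2x + 1)²`, which is nonnegative.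
-/

namespace Euler

def quintic (m1 m2 m3 x : ℝ) : ℝ :=
  (m3 + m2) * x ^ 5 + (3 * m3 + 2 * m2) * x ^ 4 + (3 * m3 + m2) * x ^ 3
    - (3 * m1 + m2) * x ^ 2 - (3 * m1 + 2 * m2) * x - (m1 + m2)

def betaNum (m1 m3 x : ℝ) : ℝ :=
  m1 * (3 * x ^ 2 + 3 * x + 1) + m3 * x ^ 2 * (x ^ 2 + 3 * x + 3)

def betaDen (m2 x : ℝ) : ℝ :=
  x ^ 2 + m2 * ((x + 1) ^ 2 * (x ^ 2 + 1) - x ^ 2)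

lemma betaNum_nonneg {m1 m3 x : ℝ} (hm1 : 0 ≤ m1) (hm3 : 0 ≤ m3) (hx : 0 ≤ x) :
    0 ≤ betaNum m1 m3 x := by
  unfold betaNum; positivity

lemma betaDen_eq (m2 x : ℝ) :
    betaDen m2 x = x ^ 2 + m2 * (x ^ 4 + 2 * x ^ 3 + x ^ 2 + 2 * x + 1) := by
  unfold betaDen; ring

lemma betaDen_pos {m2 x : ℝ} (hm2 : 0 ≤ m2) (hx : 0 < x) : 0 < betaDen m2 x := by
  rw [betaDen_eq]; positivity

lemma mul_seven_mul_betaDen_sub_betaNum {m1 m2 m3 x : ℝ} (hsum : m1 + m2 + m3 = 1)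
    (hp : quintic m1 m2 m3 x = 0) :
    (x ^ 4 + 2 * x ^ 3 + x ^ 2 + 2 * x + 1) * x * (7 * betaDen m2 x - betaNum m1 m3 x)
      = 2 * x ^ 3 * (x - 1) ^ 2 * (2 * x + 1) * (x + 2)
        + 8 * m2 * x * (x ^ 4 + 2 * x ^ 3 + x ^ 2 + 2 * x + 1) ^ 2 := by
  unfold quintic at hp
  unfold betaDen betaNum
  linear_combination (-x ^ 4 - 2 * x ^ 3 + 2 * x ^ 2 + x) * hp
    + (-3 * x ^ 7 - 12 * x ^ 6 - 19 * x ^ 5 - 12 * x ^ 4 - 3 * x ^ 3) * hsum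

lemma betaNum_le_seven_mul_betaDen {m1 m2 m3 x : ℝ} (hm2 : 0 ≤ m2) (hx : 0 < x)
    (hsum : m1 + m2 + m3 = 1) (hp : quintic m1 m2 m3 x = 0) :
    betaNum m1 m3 x ≤ 7 * betaDen m2 x := by
  have hfactor : 0 < (x ^ 4 + 2 * x ^ 3 + x ^ 2 + 2 * x + 1) * x := by positivity
  have hprod : 0 ≤ (x ^ 4 + 2 * x ^ 3 + x ^ 2 + 2 * x + 1) * x
      * (7 * betaDen m2 x - betaNum m1 m3 x) := by
    rw [mul_seven_mul_betaDen_sub_betaNum hsum hp]; positivity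
  linarith [nonneg_of_mul_nonneg_right hprod hfactor]

end Euler

theorem euler_beta_range (m1 m2 m3 x : ℝ)
    (hm1 : 0 < m1) (hm2 : 0 < m2) (hm3 : 0 < m3)
    (hsum : m1 + m2 + m3 = 1) (hx : 0 < x)
    (hp : (m3 + m2) * x ^ 5 + (3 * m3 + 2 * m2) * x ^ 4 + (3 * m3 + m2) * x ^ 3
        - (3 * m1 + m2) * x ^ 2 - (3 * m1 + 2 * m2) * x - (m1 + m2) = 0) :
    0 ≤ (m1 * (3 * x ^ 2 + 3 * x + 1) + m3 * x ^ 2 * (x ^ 2 + 3 * x + 3))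
        / (x ^ 2 + m2 * ((x + 1) ^ 2 * (x ^ 2 + 1) - x ^ 2)) ∧
    (m1 * (3 * x ^ 2 + 3 * x + 1) + m3 * x ^ 2 * (x ^ 2 + 3 * x + 3))
        / (x ^ 2 + m2 * ((x + 1) ^ 2 * (x ^ 2 + 1) - x ^ 2)) ≤ 7 := by
  change 0 ≤ Euler.betaNum m1 m3 x / Euler.betaDen m2 x
    ∧ Euler.betaNum m1 m3 x / Euler.betaDen m2 x ≤ 7
  have hden := Euler.betaDen_pos hm2.le hx
  refine ⟨div_nonneg (Euler.betaNum_nonneg hm1.le hm3.le hx.le) hden.le, ?_⟩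
  rw [div_le_iff₀ hden]
  linarith [Euler.betaNum_le_seven_mul_betaDen hm2.le hx hsum hp]
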